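/- Let d ≥ 1, N ≥ 1, and let x₀,…,x_N ∈ ℝ^d. Then 𝒞(x₀,…,x_N) = inf over (v₀,…,v_N) ∈ (ℝ^d)^{N+1} of Σ_{i=0}^{N−1} c(x_i, x_{i+1}, v_i, v_{i+1}), and the infimum on the right-hand side is attained. -/

import Mathlib

/-!
On a unit interval, the cubic Hermite interpolant `H` of the endpoint positions and velocities of a
`C²` curve `X` has affine `H''`, and `X - H` vanishes to first order at both ends; integrating by
parts twice shows that `X'' - H''` is `L²`-orthogonal to `H''`, so `∫ ‖X''‖² ≥ ∫ ‖H''‖²`, and the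
latter is exactly `c(x, x', v, v')`. Summing over the intervals bounds `𝒞` below by the discrete
infimum. The discrete cost is a coercive quadratic in the velocities, hence has a minimiser, and its
first-order condition at an interior knot says that the two adjacent Hermite cubics have the same
second derivative there. Adjacent cubics that agree to second order differ by a multiple of
`(t - k)³`, so adding truncated cubes `max (t - k) 0 ^ 3` glues them into a `C²` spline whose
energy attains the bound.
-/

open MeasureTheory

noncomputable section

/-- The cost `c(x, x', v, v') = 12‖x'−x−v‖² − 12⟨x'−x−v, v'−v⟩ + 4‖v'−v‖²`. -/
def splineCost {d : ℕ} (x x' v v' : EuclideanSpace ℝ (Fin d)) : ℝ :=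
  12 * ‖x' - x - v‖ ^ 2 - 12 * (inner ℝ (x' - x - v) (v' - v) : ℝ) + 4 * ‖v' - v‖ ^ 2

/-- `𝒞(x₀,…,x_N)`: the infimum of `∫₀^N ‖X''‖²` over all C² curves `X` with
`X(i) = x i` for every `i = 0, …, N`. -/
def multiCost {d : ℕ} (N : ℕ) (x : Fin (N + 1) → EuclideanSpace ℝ (Fin d)) : ℝ :=
  sInf { y : ℝ | ∃ X : ℝ → EuclideanSpace ℝ (Fin d), ContDiff ℝ 2 X ∧
      (∀ i : Fin (N + 1), X ((i : ℕ) : ℝ) = x i) ∧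
      y = ∫ t in (0:ℝ)..(N:ℝ), ‖deriv (deriv X) t‖ ^ 2 }

-- `((k : ℕ) : Fin (N + 1))` is `k` mod `N + 1`; it is only ever used for `k ≤ N`.
open Set Filter Topology Fin.NatCast

theorem hasDerivAt_max_zero_pow (n : ℕ) (t : ℝ) :
    HasDerivAt (fun t : ℝ => max t 0 ^ (n + 2)) ((n + 2) * max t 0 ^ (n + 1)) t := by
  refine hasDerivAt_of_hasDerivAt_of_ne' (f := fun t : ℝ => max t 0 ^ (n + 2))
    (g := fun t : ℝ => (n + 2) * max t 0 ^ (n + 1)) (x := 0) (fun y hy => ?_) (by fun_prop)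
    (by fun_prop) t
  rcases hy.lt_or_gt with hy | hy
  · have hf : (fun t : ℝ => max t 0 ^ (n + 2)) =ᶠ[𝓝 y] fun _ => 0 := by
      filter_upwards [Iio_mem_nhds hy] with s (hs : s < 0)
      simp [max_eq_right hs.le]
    simpa [max_eq_right hy.le] using (hasDerivAt_const y (0 : ℝ)).congr_of_eventuallyEq hf
  · have hf : (fun t : ℝ => max t 0 ^ (n + 2)) =ᶠ[𝓝 y] fun t => t ^ (n + 2) := by
      filter_upwards [Ioi_mem_nhds hy] with s (hs : 0 < s)
      rw [max_eq_left hs.le]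
    simpa [max_eq_left hy.le] using (hasDerivAt_pow (n + 2) y).congr_of_eventuallyEq hf

theorem contDiff_max_zero_pow (n : ℕ) : ContDiff ℝ n fun t : ℝ => max t 0 ^ (n + 1) := by
  induction n with
  | zero => simpa using continuous_id.max continuous_const
  | succ n ih =>
    have hderiv := hasDerivAt_max_zero_pow n
    rw [Nat.cast_succ, contDiff_succ_iff_deriv]
    refine ⟨fun t => (hderiv t).differentiableAt, by simp, ?_⟩
    rw [funext fun t => (hderiv t).deriv]
    exact contDiff_const.mul ih

theorem integral_zero_one_quadratic (c₀ c₁ c₂ : ℝ) :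
    ∫ t in (0 : ℝ)..1, (c₀ + c₁ * t + c₂ * t ^ 2) = c₀ + c₁ / 2 + c₂ / 3 := by
  rw [intervalIntegral.integral_add, intervalIntegral.integral_add,
    intervalIntegral.integral_const_mul, intervalIntegral.integral_const_mul, integral_id,
    integral_pow, intervalIntegral.integral_const]
  · norm_num
    ring
  all_goals exact Continuous.intervalIntegrable (by fun_prop) _ _

theorem integral_zero_natCast_eq_sum {f : ℝ → ℝ} (hf : Continuous f) (N : ℕ) :
    ∫ t in (0 : ℝ)..N, f t = ∑ k ∈ Finset.range N, ∫ t in (k : ℝ)..k + 1, f t := by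
  have h := intervalIntegral.sum_integral_adjacent_intervals (a := fun k : ℕ => (k : ℝ))
    (μ := volume) (n := N) fun k _ => hf.intervalIntegrable _ _
  simp only [Nat.cast_succ, Nat.cast_zero] at h
  exact h.symm

theorem Finset.add_le_add_of_forall_sum_range_le {α : Type*} {f : ℕ → α → α → ℝ} {N : ℕ}
    {w : ℕ → α}
    (hw : ∀ w' : ℕ → α, ∑ i ∈ range N, f i (w i) (w (i + 1)) ≤
      ∑ i ∈ range N, f i (w' i) (w' (i + 1)))
    {k : ℕ} (hk : k + 1 < N) (u : α) :
    f k (w k) (w (k + 1)) + f (k + 1) (w (k + 1)) (w (k + 2)) ≤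
      f k (w k) u + f (k + 1) u (w (k + 2)) := by
  have h := hw (Function.update w (k + 1) u)
  rw [← sub_nonneg, ← sum_sub_distrib, sum_eq_add_of_mem k (k + 1) (by simp; omega)
    (by simp; omega) (by omega) fun i _ hi => ?_] at h
  · simp only [Function.update_self, Function.update_of_ne (by omega : k ≠ k + 1),
      Function.update_of_ne (by omega : k + 1 + 1 ≠ k + 1)] at h
    linarith
  · rw [Function.update_of_ne (by omega), Function.update_of_ne (by omega), sub_self]

section NormedSpace

variable {E : Type*} [NormedAddCommGroup E] [NormedSpace ℝ E]

theorem deriv_deriv_comp_sub_const (f : ℝ → E) (a : ℝ) :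
    deriv (deriv fun t => f (t - a)) = fun t => deriv (deriv f) (t - a) := by
  ext1 t
  rw [show deriv (fun t => f (t - a)) = fun t => deriv f (t - a) from
    funext fun t => deriv_comp_sub_const f a t, deriv_comp_sub_const]

theorem integral_norm_sq_deriv_deriv_congr {f g : ℝ → E} {a b : ℝ} (hab : a ≤ b)
    (h : EqOn f g (Icc a b)) :
    ∫ t in a..b, ‖deriv (deriv f) t‖ ^ 2 = ∫ t in a..b, ‖deriv (deriv g) t‖ ^ 2 :=
  intervalIntegral.integral_congr_Ioo_of_le hab fun t ht => by
    rw [(((h.mono Ioo_subset_Icc_self).deriv isOpen_Ioo).deriv isOpen_Ioo) ht]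

theorem exists_contDiff_eqOn_of_cubic_jumps (P : ℕ → ℝ → E) (J : ℕ → E) (N : ℕ)
    (hP : ContDiff ℝ 2 (P 0))
    (hJ : ∀ k, k + 1 < N → ∀ t, P (k + 1) t = P k t + (t - (k + 1)) ^ 3 • J k) :
    ∃ X : ℝ → E, ContDiff ℝ 2 X ∧ ∀ k < N, EqOn X (P k) (Icc k (k + 1)) := by
  have htelescope (k : ℕ) (hk : k < N) (t : ℝ) :
      P k t = P 0 t + ∑ j ∈ Finset.range k, (t - (j + 1)) ^ 3 • J j := by
    induction k with
    | zero => simp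
    | succ k ih => rw [hJ k hk, ih (by omega), Finset.sum_range_succ, add_assoc]
  refine ⟨fun t => P 0 t + ∑ j ∈ Finset.range N, max (t - (j + 1)) 0 ^ 3 • J j, ?_, ?_⟩
  · have hcube : ContDiff ℝ 2 fun t : ℝ => max t 0 ^ 3 := contDiff_max_zero_pow 2
    exact hP.add (ContDiff.sum fun j _ =>
      (hcube.comp (contDiff_id.sub contDiff_const)).smul contDiff_const)
  · intro k hk t ⟨htk, htk'⟩
    have hpast : ∀ j ∈ Finset.range k,
        max (t - (j + 1)) 0 ^ 3 • J j = (t - (j + 1)) ^ 3 • J j := by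
      intro j hj
      have : (j : ℝ) + 1 ≤ k := by exact_mod_cast Finset.mem_range.1 hj
      rw [max_eq_left (by linarith)]
    have hfuture : ∀ j ∈ Finset.Ico k N, max (t - (j + 1)) 0 ^ 3 • J j = 0 := by
      intro j hj
      have : (k : ℝ) ≤ j := by exact_mod_cast (Finset.mem_Ico.1 hj).1
      rw [max_eq_right (by linarith), zero_pow three_ne_zero, zero_smul]
    dsimp only
    rw [htelescope k hk, ← Finset.sum_range_add_sum_Ico _ hk.le, Finset.sum_congr rfl hpast,
      Finset.sum_eq_zero hfuture, add_zero]

def hermiteCubic (x x' v v' : E) (t : ℝ) : E :=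
  x + t • v + (3 * t ^ 2 - 2 * t ^ 3) • (x' - x - v) + (t ^ 3 - t ^ 2) • (v' - v)

namespace hermiteCubic

variable (x x' v v' : E)

theorem apply_zero : hermiteCubic x x' v v' 0 = x := by simp [hermiteCubic]

theorem apply_one : hermiteCubic x x' v v' 1 = x' := by
  simp only [hermiteCubic]
  module

theorem hasDerivAt (t : ℝ) : HasDerivAt (hermiteCubic x x' v v')
    (v + (6 * t - 6 * t ^ 2) • (x' - x - v) + (3 * t ^ 2 - 2 * t) • (v' - v)) t := by
  have h₁ := (hasDerivAt_id t).smul_const v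
  have h₂ := (((hasDerivAt_pow 2 t).const_mul 3).sub
    ((hasDerivAt_pow 3 t).const_mul 2)).smul_const (x' - x - v)
  have h₃ := ((hasDerivAt_pow 3 t).sub (hasDerivAt_pow 2 t)).smul_const (v' - v)
  refine ((((hasDerivAt_const t x).add h₁).add h₂).add h₃).congr_deriv ?_
  norm_num
  module

theorem deriv_eq : deriv (hermiteCubic x x' v v') =
    fun t => v + (6 * t - 6 * t ^ 2) • (x' - x - v) + (3 * t ^ 2 - 2 * t) • (v' - v) :=
  funext fun t => (hasDerivAt x x' v v' t).deriv

theorem hasDerivAt_deriv (t : ℝ) : HasDerivAt (deriv (hermiteCubic x x' v v'))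
    ((6 - 12 * t) • (x' - x - v) + (6 * t - 2) • (v' - v)) t := by
  rw [deriv_eq]
  have h₂ := (((hasDerivAt_id t).const_mul 6).sub
    ((hasDerivAt_pow 2 t).const_mul 6)).smul_const (x' - x - v)
  have h₃ := (((hasDerivAt_pow 2 t).const_mul 3).sub
    ((hasDerivAt_id t).const_mul 2)).smul_const (v' - v)
  refine (((hasDerivAt_const t v).add h₂).add h₃).congr_deriv ?_
  norm_num
  module

theorem deriv_deriv_eq : deriv (deriv (hermiteCubic x x' v v')) =
    fun t => (6 - 12 * t) • (x' - x - v) + (6 * t - 2) • (v' - v) :=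
  funext fun t => (hasDerivAt_deriv x x' v v' t).deriv

theorem hasDerivAt_deriv_deriv (t : ℝ) : HasDerivAt (deriv (deriv (hermiteCubic x x' v v')))
    ((-12 : ℝ) • (x' - x - v) + (6 : ℝ) • (v' - v)) t := by
  rw [deriv_deriv_eq]
  have h₂ := ((hasDerivAt_id t).const_mul 12).const_sub 6 |>.smul_const (x' - x - v)
  have h₃ := ((hasDerivAt_id t).const_mul 6).sub_const 2 |>.smul_const (v' - v)
  refine (h₂.add h₃).congr_deriv ?_
  norm_num

theorem deriv_zero : deriv (hermiteCubic x x' v v') 0 = v := by simp [deriv_eq]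

theorem deriv_one : deriv (hermiteCubic x x' v v') 1 = v' := by
  simp only [deriv_eq]
  module

theorem contDiff : ContDiff ℝ 2 (hermiteCubic x x' v v') := by
  unfold hermiteCubic
  fun_prop

end hermiteCubic

theorem exists_hermiteCubic_sub_one_eq {x x' x'' v v' v'' : E}
    (h : deriv (deriv (hermiteCubic x x' v v')) 1 =
      deriv (deriv (hermiteCubic x' x'' v' v'')) 0) :
    ∃ J : E, ∀ s,
      hermiteCubic x' x'' v' v'' (s - 1) = hermiteCubic x x' v v' s + (s - 1) ^ 3 • J := by
  refine ⟨(v'' - v' - (2 : ℝ) • (x'' - x' - v')) - (v' - v - (2 : ℝ) • (x' - x - v)),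
    fun s => ?_⟩
  -- both sides are cubics in `s` with the same value, slope and leading coefficient
  have key : hermiteCubic x' x'' v' v'' (s - 1) - (hermiteCubic x x' v v' s + (s - 1) ^ 3 •
      ((v'' - v' - (2 : ℝ) • (x'' - x' - v')) - (v' - v - (2 : ℝ) • (x' - x - v)))) =
      ((s - 1) ^ 2 / 2) • (deriv (deriv (hermiteCubic x' x'' v' v'')) 0 -
        deriv (deriv (hermiteCubic x x' v v')) 1) := by
    simp only [hermiteCubic.deriv_deriv_eq, hermiteCubic]
    match_scalars <;> ring
  rwa [← h, sub_self, smul_zero, sub_eq_zero] at key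

end NormedSpace

section InnerProductSpace

variable {E : Type*} [NormedAddCommGroup E] [InnerProductSpace ℝ E]

theorem integral_inner_deriv_deriv_eq_zero {D W : ℝ → E} {c : E} {a b : ℝ}
    (hD : ContDiff ℝ 2 D) (hW : ∀ t, HasDerivAt W c t)
    (ha : D a = 0) (hb : D b = 0) (ha' : deriv D a = 0) (hb' : deriv D b = 0) :
    ∫ t in a..b, inner ℝ (deriv (deriv D) t) (W t) = 0 := by
  have hD₁ t : HasDerivAt D (deriv D t) t := (hD.differentiable (by norm_num) t).hasDerivAt
  have hD₂ t : HasDerivAt (deriv D) (deriv (deriv D) t) t :=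
    (hD.differentiable_deriv_two t).hasDerivAt
  have hφ t : HasDerivAt (fun t => inner ℝ (deriv D t) (W t) - inner ℝ (D t) c)
      (inner ℝ (deriv (deriv D) t) (W t)) t := by
    refine (((hD₂ t).inner ℝ (hW t)).sub ((hD₁ t).inner ℝ (hasDerivAt_const t c))).congr_deriv ?_
    simp
  have hcont : Continuous fun t => inner ℝ (deriv (deriv D) t) (W t) :=
    (hD.deriv' (n := 1)).continuous_deriv_one.inner
      (continuous_iff_continuousAt.2 fun t => (hW t).continuousAt)
  rw [intervalIntegral.integral_eq_sub_of_hasDerivAt (fun t _ => hφ t)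
    (hcont.intervalIntegrable a b)]
  simp [ha, hb, ha', hb']

theorem integral_norm_sq_deriv_deriv_le {X Y : ℝ → E} {c : E} {a b : ℝ} (hab : a ≤ b)
    (hX : ContDiff ℝ 2 X) (hY : ContDiff ℝ 2 Y) (hY₃ : ∀ t, HasDerivAt (deriv (deriv Y)) c t)
    (ha : X a = Y a) (hb : X b = Y b) (ha' : deriv X a = deriv Y a)
    (hb' : deriv X b = deriv Y b) :
    ∫ t in a..b, ‖deriv (deriv Y) t‖ ^ 2 ≤ ∫ t in a..b, ‖deriv (deriv X) t‖ ^ 2 := by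
  have hD : ContDiff ℝ 2 (X - Y) := hX.sub hY
  have hD₁ : deriv (X - Y) = deriv X - deriv Y := funext fun t =>
    deriv_sub (hX.differentiable (by norm_num) t) (hY.differentiable (by norm_num) t)
  have hD₂ : deriv (deriv (X - Y)) = deriv (deriv X) - deriv (deriv Y) := by
    rw [hD₁]
    exact funext fun t => deriv_sub (hX.differentiable_deriv_two t) (hY.differentiable_deriv_two t)
  have horth := integral_inner_deriv_deriv_eq_zero (a := a) (b := b) hD hY₃
    (sub_eq_zero.2 ha) (sub_eq_zero.2 hb) (by simp [hD₁, ha']) (by simp [hD₁, hb'])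
  have hX₂ := (hX.deriv' (n := 1)).continuous_deriv_one
  have hY₂ := (hY.deriv' (n := 1)).continuous_deriv_one
  have hD₂c := (hD.deriv' (n := 1)).continuous_deriv_one
  have hpointwise (t : ℝ) : ‖deriv (deriv X) t‖ ^ 2 - ‖deriv (deriv Y) t‖ ^ 2 =
      2 * inner ℝ (deriv (deriv (X - Y)) t) (deriv (deriv Y) t) +
        ‖deriv (deriv (X - Y)) t‖ ^ 2 := by
    have h := norm_add_sq_real (deriv (deriv Y) t) (deriv (deriv X) t - deriv (deriv Y) t)
    rw [add_sub_cancel] at h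
    rw [hD₂, Pi.sub_apply, h, real_inner_comm]
    ring
  have hint {f : ℝ → ℝ} (hf : Continuous f) : IntervalIntegrable f volume a b :=
    hf.intervalIntegrable a b
  rw [← sub_nonneg, ← intervalIntegral.integral_sub (hint (by fun_prop)) (hint (by fun_prop)),
    intervalIntegral.integral_congr fun t _ => hpointwise t,
    intervalIntegral.integral_add (hint (by fun_prop)) (hint (by fun_prop)),
    intervalIntegral.integral_const_mul, horth, mul_zero, zero_add]
  exact intervalIntegral.integral_nonneg hab fun t _ => by positivity

theorem hermiteCubic.integral_norm_sq_deriv_deriv (x x' v v' : E) :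
    ∫ t in (0 : ℝ)..1, ‖deriv (deriv (hermiteCubic x x' v v')) t‖ ^ 2 =
      12 * ‖x' - x - v‖ ^ 2 - 12 * inner ℝ (x' - x - v) (v' - v) + 4 * ‖v' - v‖ ^ 2 := by
  have h (t : ℝ) : ‖deriv (deriv (hermiteCubic x x' v v')) t‖ ^ 2 =
      36 * ‖x' - x - v‖ ^ 2 + 4 * ‖v' - v‖ ^ 2 - 24 * inner ℝ (x' - x - v) (v' - v)
      + (-144 * ‖x' - x - v‖ ^ 2 - 24 * ‖v' - v‖ ^ 2
        + 120 * inner ℝ (x' - x - v) (v' - v)) * t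
      + (144 * ‖x' - x - v‖ ^ 2 + 36 * ‖v' - v‖ ^ 2
        - 144 * inner ℝ (x' - x - v) (v' - v)) * t ^ 2 := by
    rw [hermiteCubic.deriv_deriv_eq, norm_add_sq_real, norm_smul, norm_smul, real_inner_smul_left,
      real_inner_smul_right, Real.norm_eq_abs, Real.norm_eq_abs, mul_pow, mul_pow, sq_abs, sq_abs]
    ring
  simp only [h, integral_zero_one_quadratic]
  ring

end InnerProductSpace

section Euclidean

variable {d : ℕ}

local notation "𝔼" => EuclideanSpace ℝ (Fin d)

theorem splineCost_eq_integral_comp_sub (x x' v v' : 𝔼) (a : ℝ) :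
    splineCost x x' v v' =
      ∫ t in a..a + 1, ‖deriv (deriv fun t => hermiteCubic x x' v v' (t - a)) t‖ ^ 2 := by
  rw [deriv_deriv_comp_sub_const, intervalIntegral.integral_comp_sub_right
    (fun t => ‖deriv (deriv (hermiteCubic x x' v v')) t‖ ^ 2), sub_self, add_sub_cancel_left,
    hermiteCubic.integral_norm_sq_deriv_deriv, splineCost]

theorem splineCost_le_integral {Z : ℝ → 𝔼} (hZ : ContDiff ℝ 2 Z) (a : ℝ) :
    splineCost (Z a) (Z (a + 1)) (deriv Z a) (deriv Z (a + 1)) ≤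
      ∫ t in a..a + 1, ‖deriv (deriv Z) t‖ ^ 2 := by
  have hH₃ (t : ℝ) := (hermiteCubic.hasDerivAt_deriv_deriv (Z a) (Z (a + 1)) (deriv Z a)
    (deriv Z (a + 1)) (t - a)).comp_sub_const t a
  rw [← deriv_deriv_comp_sub_const] at hH₃
  rw [splineCost_eq_integral_comp_sub _ _ _ _ a]
  exact integral_norm_sq_deriv_deriv_le (by linarith) hZ
    ((hermiteCubic.contDiff ..).comp (contDiff_id.sub contDiff_const)) hH₃
    (by simp [hermiteCubic.apply_zero]) (by simp [hermiteCubic.apply_one])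
    (by simp [deriv_comp_sub_const, hermiteCubic.deriv_zero])
    (by simp [deriv_comp_sub_const, hermiteCubic.deriv_one])

theorem deriv_deriv_hermiteCubic_eq_of_forall_le {x x' x'' v v' v'' : 𝔼}
    (h : ∀ u, splineCost x x' v v' + splineCost x' x'' v' v'' ≤
      splineCost x x' v u + splineCost x' x'' u v'') :
    deriv (deriv (hermiteCubic x x' v v')) 1 = deriv (deriv (hermiteCubic x' x'' v' v'')) 0 := by
  set G := deriv (deriv (hermiteCubic x x' v v')) 1 -
    deriv (deriv (hermiteCubic x' x'' v' v'')) 0 with hG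
  -- `G / 2` is the gradient of the two-term cost in the shared velocity `v'`
  have hdescent : splineCost x x' v (v' - (8⁻¹ : ℝ) • G) +
      splineCost x' x'' (v' - (8⁻¹ : ℝ) • G) v'' =
        splineCost x x' v v' + splineCost x' x'' v' v'' - ‖G‖ ^ 2 / 8 := by
    simp only [hG, splineCost, hermiteCubic.deriv_deriv_eq, ← real_inner_self_eq_norm_sq,
      inner_add_left, inner_add_right, inner_sub_left, inner_sub_right, real_inner_smul_left,
      real_inner_smul_right]
    simp only [real_inner_comm]
    ring
  have hG0 : ‖G‖ ^ 2 ≤ 0 := by linarith [h (v' - (8⁻¹ : ℝ) • G)]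
  rw [← sub_eq_zero, ← norm_eq_zero]
  exact pow_eq_zero_iff two_ne_zero |>.1 (le_antisymm hG0 (sq_nonneg _))

theorem norm_sq_add_norm_sq_le_splineCost (x x' v v' : 𝔼) :
    ‖v‖ ^ 2 + ‖v'‖ ^ 2 ≤ splineCost x x' v v' + 60 * ‖x' - x‖ ^ 2 := by
  have h₁ := real_inner_self_nonneg (x := v + v')
  have h₂ := real_inner_self_nonneg (x := v - (6 : ℝ) • (x' - x))
  have h₃ := real_inner_self_nonneg (x := v' - (6 : ℝ) • (x' - x))
  simp only [splineCost, ← real_inner_self_eq_norm_sq, inner_add_left, inner_add_right,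
    inner_sub_left, inner_sub_right, real_inner_smul_left, real_inner_smul_right] at h₁ h₂ h₃ ⊢
  simp only [real_inner_comm] at h₁ h₂ h₃ ⊢
  linarith

def splineCostSum (p w : ℕ → 𝔼) (N : ℕ) : ℝ :=
  ∑ k ∈ Finset.range N, splineCost (p k) (p (k + 1)) (w k) (w (k + 1))

theorem splineCostSum_congr {p p' w w' : ℕ → 𝔼} {N : ℕ}
    (hp : ∀ k ≤ N, p k = p' k) (hw : ∀ k ≤ N, w k = w' k) :
    splineCostSum p w N = splineCostSum p' w' N :=
  Finset.sum_congr rfl fun k hk => by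
    have hk := Finset.mem_range.1 hk
    rw [hp k hk.le, hp (k + 1) hk, hw k hk.le, hw (k + 1) hk]

theorem splineCostSum_le_integral {Z : ℝ → 𝔼} (hZ : ContDiff ℝ 2 Z) (N : ℕ) :
    splineCostSum (fun k => Z k) (fun k => deriv Z k) N ≤
      ∫ t in (0 : ℝ)..N, ‖deriv (deriv Z) t‖ ^ 2 := by
  rw [integral_zero_natCast_eq_sum (f := fun t => ‖deriv (deriv Z) t‖ ^ 2)
    ((hZ.deriv' (n := 1)).continuous_deriv_one.norm.pow 2)]
  refine Finset.sum_le_sum fun k _ => ?_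
  simpa only [Nat.cast_succ] using splineCost_le_integral hZ k

theorem norm_sq_le_splineCostSum (p w : ℕ → 𝔼) {N j : ℕ} (hN : 1 ≤ N) (hj : j ≤ N) :
    ‖w j‖ ^ 2 ≤ splineCostSum p w N + 60 * ∑ k ∈ Finset.range N, ‖p (k + 1) - p k‖ ^ 2 := by
  obtain ⟨k, hk, hjk⟩ : ∃ k < N, j = k ∨ j = k + 1 := by
    rcases hj.lt_or_eq with hj | rfl
    · exact ⟨j, hj, .inl rfl⟩
    · exact ⟨j - 1, by omega, .inr (by omega)⟩
  have hterm (i : ℕ) : ‖w i‖ ^ 2 + ‖w (i + 1)‖ ^ 2 ≤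
      splineCost (p i) (p (i + 1)) (w i) (w (i + 1)) + 60 * ‖p (i + 1) - p i‖ ^ 2 :=
    norm_sq_add_norm_sq_le_splineCost ..
  rw [splineCostSum, Finset.mul_sum, ← Finset.sum_add_distrib]
  calc ‖w j‖ ^ 2 ≤ ‖w k‖ ^ 2 + ‖w (k + 1)‖ ^ 2 := by
        rcases hjk with rfl | rfl <;> simp
    _ ≤ _ := hterm k
    _ ≤ _ := Finset.single_le_sum (fun i _ => (add_nonneg (sq_nonneg _) (sq_nonneg _)).trans
        (hterm i)) (Finset.mem_range.2 hk)

theorem exists_forall_splineCostSum_le (p : ℕ → 𝔼) {N : ℕ} (hN : 1 ≤ N) :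
    ∃ w : ℕ → 𝔼, ∀ w', splineCostSum p w N ≤ splineCostSum p w' N := by
  set K := 60 * ∑ k ∈ Finset.range N, ‖p (k + 1) - p k‖ ^ 2
  set Φ : (Fin (N + 1) → 𝔼) → ℝ := fun v => splineCostSum p (fun k => v k) N
  have hcont : Continuous Φ :=
    continuous_finsetSum _ fun k _ => by unfold splineCost; fun_prop
  have hbound v : ‖v‖ ^ 2 - K ≤ Φ v := by
    have hcoord (j : Fin (N + 1)) : ‖v j‖ ^ 2 ≤ Φ v + K := by
      simpa using norm_sq_le_splineCostSum p (fun k => v k) hN (Nat.lt_succ_iff.1 j.is_lt)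
    have hnonneg : 0 ≤ Φ v + K := (sq_nonneg _).trans (hcoord 0)
    have hnorm : ‖v‖ ≤ √(Φ v + K) := (pi_norm_le_iff_of_nonneg (Real.sqrt_nonneg _)).2 fun j =>
      Real.le_sqrt_of_sq_le (hcoord j)
    nlinarith [Real.sq_sqrt hnonneg, norm_nonneg v]
  have hcoercive : Tendsto Φ (cocompact _) atTop :=
    tendsto_atTop_mono hbound <| tendsto_atTop_add_const_right _ _
      ((tendsto_pow_atTop two_ne_zero).comp tendsto_norm_cocompact_atTop)
  obtain ⟨v, hv⟩ := hcont.exists_forall_le hcoercive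
  refine ⟨fun k => v k, fun w' => (hv fun j => w' j).trans_eq (splineCostSum_congr
    (fun _ _ => rfl) fun k hk => ?_)⟩
  simp [Fin.val_cast_of_lt (Nat.lt_succ_of_le hk)]

theorem exists_contDiff_integral_eq_splineCostSum {p w : ℕ → 𝔼} {N : ℕ}
    (hN : 1 ≤ N) (hw : ∀ w', splineCostSum p w N ≤ splineCostSum p w' N) :
    ∃ X : ℝ → 𝔼, ContDiff ℝ 2 X ∧ (∀ k ≤ N, X k = p k) ∧
      ∫ t in (0 : ℝ)..N, ‖deriv (deriv X) t‖ ^ 2 = splineCostSum p w N := by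
  set P : ℕ → ℝ → 𝔼 := fun k t => hermiteCubic (p k) (p (k + 1)) (w k) (w (k + 1)) (t - k)
  have hjump (k : ℕ) : ∃ J, k + 1 < N → ∀ t, P (k + 1) t = P k t + (t - (k + 1)) ^ 3 • J := by
    by_cases hk : k + 1 < N
    · obtain ⟨J, hJ⟩ := exists_hermiteCubic_sub_one_eq
        (deriv_deriv_hermiteCubic_eq_of_forall_le
          (Finset.add_le_add_of_forall_sum_range_le (f := fun k a b =>
            splineCost (p k) (p (k + 1)) a b) hw hk))
      exact ⟨J, fun _ t => by simpa [P, sub_sub] using hJ (t - k)⟩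
    · exact ⟨0, fun hk' => absurd hk' hk⟩
  choose J hJ using hjump
  obtain ⟨X, hX, hXP⟩ := exists_contDiff_eqOn_of_cubic_jumps P J N
    ((hermiteCubic.contDiff ..).comp (contDiff_id.sub contDiff_const)) fun k hk => hJ k hk
  refine ⟨X, hX, fun k hk => ?_, ?_⟩
  · rcases hk.lt_or_eq with hk | rfl
    · rw [hXP k hk ⟨le_rfl, by linarith⟩]
      simp [P, hermiteCubic.apply_zero]
    · obtain ⟨n, rfl⟩ : ∃ n, k = n + 1 := ⟨k - 1, by omega⟩
      rw [hXP n (by omega) ⟨by push_cast; linarith, by push_cast; rfl⟩]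
      simp [P, hermiteCubic.apply_one]
  · rw [integral_zero_natCast_eq_sum (f := fun t => ‖deriv (deriv X) t‖ ^ 2)
      ((hX.deriv' (n := 1)).continuous_deriv_one.norm.pow 2)]
    refine Finset.sum_congr rfl fun k hk => ?_
    rw [integral_norm_sq_deriv_deriv_congr (by linarith) (hXP k (Finset.mem_range.1 hk)),
      ← splineCost_eq_integral_comp_sub]

theorem sum_fin_splineCost_eq_splineCostSum {N : ℕ} (x v : Fin (N + 1) → 𝔼) :
    ∑ i : Fin N, splineCost (x i.castSucc) (x i.succ) (v i.castSucc) (v i.succ) =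
      splineCostSum (fun k => x k) (fun k => v k) N := by
  rw [splineCostSum, ← Fin.sum_univ_eq_sum_range]
  refine Finset.sum_congr rfl fun i _ => ?_
  have hcast : ((i : ℕ) : Fin (N + 1)) = i.castSucc := by simp
  have hsucc : (((i : ℕ) + 1 : ℕ) : Fin (N + 1)) = i.succ := by simp
  rw [hcast, hsucc]

theorem isLeast_integral_of_forall_splineCostSum_le {N : ℕ} (hN : 1 ≤ N)
    (x : Fin (N + 1) → 𝔼) {w : ℕ → 𝔼}
    (hw : ∀ w', splineCostSum (fun k => x k) w N ≤ splineCostSum (fun k => x k) w' N) :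
    IsLeast {y | ∃ X : ℝ → 𝔼, ContDiff ℝ 2 X ∧ (∀ i : Fin (N + 1), X ((i : ℕ) : ℝ) = x i) ∧
      y = ∫ t in (0 : ℝ)..N, ‖deriv (deriv X) t‖ ^ 2} (splineCostSum (fun k => x k) w N) := by
  refine ⟨?_, ?_⟩
  · obtain ⟨X, hX, hXx, hXE⟩ := exists_contDiff_integral_eq_splineCostSum hN hw
    exact ⟨X, hX, fun i => by simpa using hXx i (Nat.lt_succ_iff.1 i.is_lt), hXE.symm⟩
  · rintro _ ⟨Z, hZ, hZx, rfl⟩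
    calc splineCostSum (fun k => x k) w N
        ≤ splineCostSum (fun k => x k) (fun k => deriv Z k) N := hw _
      _ = splineCostSum (fun k => Z k) (fun k => deriv Z k) N :=
        splineCostSum_congr (fun k hk => by
          simpa [Fin.val_cast_of_lt (Nat.lt_succ_of_le hk)] using (hZx k).symm) fun _ _ => rfl
      _ ≤ _ := splineCostSum_le_integral hZ N

end Euclidean

theorem stmt3_general (d N : ℕ) (hN : 1 ≤ N)
    (x : Fin (N + 1) → EuclideanSpace ℝ (Fin d)) :
    IsLeast { y : ℝ | ∃ v : Fin (N + 1) → EuclideanSpace ℝ (Fin d),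
        y = ∑ i : Fin N, splineCost (x i.castSucc) (x i.succ) (v i.castSucc) (v i.succ) }
      (multiCost N x) := by
  obtain ⟨w, hw⟩ := exists_forall_splineCostSum_le (fun k => x k) hN
  rw [multiCost, (isLeast_integral_of_forall_splineCostSum_le hN x hw).csInf_eq]
  refine ⟨⟨fun i => w i, ?_⟩, ?_⟩
  · refine (splineCostSum_congr (fun _ _ => rfl) fun k hk => ?_).trans
      (sum_fin_splineCost_eq_splineCostSum x fun i => w i).symm
    simp [Fin.val_cast_of_lt (Nat.lt_succ_of_le hk)]
  · rintro _ ⟨v, rfl⟩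
    rw [sum_fin_splineCost_eq_splineCostSum]
    exact hw _

/-- `𝒞(x₀,…,x_N)` equals the infimum over all velocities `(v₀,…,v_N)` of
`Σ_{i=0}^{N−1} c(x_i, x_{i+1}, v_i, v_{i+1})`, and this infimum is attained. -/
theorem stmt3 (d N : ℕ) (hd : 1 ≤ d) (hN : 1 ≤ N)
    (x : Fin (N + 1) → EuclideanSpace ℝ (Fin d)) :
    IsLeast { y : ℝ | ∃ v : Fin (N + 1) → EuclideanSpace ℝ (Fin d),
        y = ∑ i : Fin N, splineCost (x i.castSucc) (x i.succ) (v i.castSucc) (v i.succ) }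
      (multiCost N x) :=
  stmt3_general d N hN x
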